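/- arXiv:2509.00957 — 2 statements merged into one kernel-verified Lean document; each statement's English description precedes it below -/
import Mathlib

section
/- Let p, m₁, d, q be natural numbers, let g : ℝ^p × ℝ^d → (ℝ^{q×m₁} matrices) be differentiable in its first argument at θ̃, and set θ = (θ̃, w) ∈ ℝ^{p+m₁} and f_θ(z) = g(θ̃, z)·w. Then the function z ↦ f_θ(z) lies in the span of the partial-derivative functions: there exists a coefficient vector v ∈ ℝ^{p+m₁} (namely v = (0, w)) such that for all z ∈ ℝ^d, f_θ(z) = Σ_{i=1}^{p+m₁} v_i · (∂f_θ/∂θ_i)(z). -/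
/-!
The output `f_θ z = g(θ̃, z) · w` is linear in the last-layer weights `w`, so the derivative of
`f` at `θ` in the direction `(0, v)` is `g(θ̃, z) · v`. Expanding `w` in the standard basis,
`f_θ z = Σ_j w_j · ∂f_θ/∂w_j z`: the coefficient vector `(0, w)` works.
-/

section PartialDeriv

variable {𝕜 E E' G : Type*} [NontriviallyNormedField 𝕜]
  [NormedAddCommGroup E] [NormedSpace 𝕜 E] [NormedAddCommGroup E'] [NormedSpace 𝕜 E']
  [NormedAddCommGroup G] [NormedSpace 𝕜 G]

theorem fderiv_apply_zero_prod_of_eq_clm {F : E × E' → G} {x : E} {y : E'}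
    (hF : DifferentiableAt 𝕜 F (x, y)) (L : E' →L[𝕜] G) (hL : ∀ y', F (x, y') = L y')
    (v : E') : fderiv 𝕜 F (x, y) (0, v) = L v := by
  have hrestrict : HasFDerivAt (fun y' => F (x, y'))
      ((fderiv 𝕜 F (x, y)).comp (ContinuousLinearMap.inr 𝕜 E E')) y :=
    hF.hasFDerivAt.comp y (hasFDerivAt_prodMk_right x y)
  have hL' : HasFDerivAt (fun y' => F (x, y')) L y := by
    simpa only [hL] using L.hasFDerivAt
  simpa using congrArg (· v) (hrestrict.unique hL')

theorem eq_sum_smul_fderiv_apply_zero_single {n : ℕ} {F : E × (Fin n → 𝕜) → G} {x : E}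
    {y : Fin n → 𝕜} (hF : DifferentiableAt 𝕜 F (x, y)) (L : (Fin n → 𝕜) →L[𝕜] G)
    (hL : ∀ y', F (x, y') = L y') :
    F (x, y) = ∑ j, y j • fderiv 𝕜 F (x, y) (0, Pi.single j 1) := by
  simp only [fderiv_apply_zero_prod_of_eq_clm hF L hL, ← map_smul, ← map_sum, hL]
  rw [← pi_eq_sum_univ' y]

end PartialDeriv

/-- Proposition 2.1: if `f_θ z = g θt z · w` with `θ = (θt, w)` and `g`
differentiable in its first argument at `θt`, then `z ↦ f_θ z` lies in the span of the
partial-derivative functions `z ↦ ∂f_θ/∂θ_i z`: there is a coefficient vector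
`v = (v₁, v₂) ∈ ℝ^p × ℝ^{m₁}` with `f_θ z = Σ_i v_i · ∂f_θ/∂θ_i z` for all `z`. -/
theorem stmt1 (p m₁ d q : ℕ)
    (g : (Fin p → ℝ) → (Fin d → ℝ) → Fin q → Fin m₁ → ℝ)
    (θt : Fin p → ℝ) (w : Fin m₁ → ℝ)
    (hg : ∀ z : Fin d → ℝ, DifferentiableAt ℝ (fun θ => g θ z) θt)
    (f : ((Fin p → ℝ) × (Fin m₁ → ℝ)) → (Fin d → ℝ) → Fin q → ℝ)
    (hf : ∀ θw z i, f θw z i = ∑ j, g θw.1 z i j * θw.2 j) :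
    ∃ v : (Fin p → ℝ) × (Fin m₁ → ℝ), ∀ z : Fin d → ℝ,
      f (θt, w) z =
        (∑ i : Fin p,
          v.1 i • fderiv ℝ (fun θw => f θw z) (θt, w) (Pi.single i 1, 0)) +
        ∑ j : Fin m₁,
          v.2 j • fderiv ℝ (fun θw => f θw z) (θt, w) (0, Pi.single j 1) := by
  refine ⟨(0, w), fun z => ?_⟩
  have hg_entry : ∀ i j, DifferentiableAt ℝ (fun θ => g θ z i j) θt := fun i j =>
    differentiableAt_pi.1 (differentiableAt_pi.1 (hg z) i) j
  have hdiff : DifferentiableAt ℝ (fun θw => f θw z) (θt, w) :=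
    differentiableAt_pi.2 fun i => by simp only [hf]; fun_prop
  simp only [Pi.zero_apply, zero_smul, Finset.sum_const_zero, zero_add]
  exact eq_sum_smul_fderiv_apply_zero_single hdiff
    (Matrix.mulVecLin (g θt z)).toContinuousLinearMap fun w' => funext (hf (θt, w') z)
end

section
/- Let H be a real normed vector space, let S : H → H be a continuous linear map, let h > 0 and C₁ > 0, and assume ‖w + h·S(w)‖ ≤ (1 + h·C₁)·‖w‖ for all w ∈ H. Let u, v, r : ℕ → H be sequences with u(0) = v(0), u(k+1) = u(k) + h·r(k), and v(k+1) = v(k) + h·S(v(k)). Suppose there is δ₁ ≥ 0 such that ‖r(k) − S(u(k))‖ ≤ δ₁ for all k. Then for every k ∈ ℕ and every sequence w : ℕ → H, ‖u(k) − w(k)‖ ≤ ‖v(k) − w(k)‖ + (δ₁/C₁)·(exp(C₁·h·k) − 1). -/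
/-!
The difference `e k = u k - v k` obeys the perturbed recursion
`e (k+1) = (e k + h • S (e k)) + h • (r k - S (u k))`, so by stability and the projection bound
`‖e (k+1)‖ ≤ (1 + h C₁) ‖e k‖ + h δ₁` with `e 0 = 0`. A discrete Gronwall inequality, using
`1 + h C₁ ≤ exp (h C₁)`, turns this into `‖e k‖ ≤ (δ₁/C₁) (exp (C₁ h k) - 1)`, and the triangle
inequality through `v k` finishes.
-/

open Real

theorem le_div_mul_exp_sub_one_of_le_one_add_mul_add {e : ℕ → ℝ} {a b : ℝ}
    (ha : 0 < a) (hb : 0 ≤ b) (he₀ : e 0 ≤ 0) (hstep : ∀ k, e (k + 1) ≤ (1 + a) * e k + b) :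
    ∀ k : ℕ, e k ≤ b / a * (exp (a * k) - 1) := by
  intro k
  induction k with
  | zero => simpa using he₀
  | succ k ih =>
    have hexp : (1 + a) * exp (a * k) ≤ exp (a * ↑(k + 1)) := by
      rw [Nat.cast_succ, mul_add_one, exp_add, mul_comm]
      gcongr
      linarith [add_one_le_exp a]
    calc e (k + 1) ≤ (1 + a) * e k + b := hstep k
      _ ≤ (1 + a) * (b / a * (exp (a * k) - 1)) + b := by gcongr
      _ = b / a * ((1 + a) * exp (a * k) - 1) := by field_simp; ring
      _ ≤ b / a * (exp (a * ↑(k + 1)) - 1) := by gcongr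

section StepError

variable {E : Type*} [NormedAddCommGroup E] [NormedSpace ℝ E] (S : E →L[ℝ] E) {h C : ℝ}

theorem norm_perturbed_step_sub_step_le (hh : 0 ≤ h)
    (hstab : ∀ w : E, ‖w + h • S w‖ ≤ (1 + h * C) * ‖w‖) (x y r : E) :
    ‖(x + h • r) - (y + h • S y)‖ ≤ (1 + h * C) * ‖x - y‖ + h * ‖r - S x‖ := by
  have hsplit : (x + h • r) - (y + h • S y) = ((x - y) + h • S (x - y)) + h • (r - S x) := by
    simp only [map_sub, smul_sub]
    abel
  calc ‖(x + h • r) - (y + h • S y)‖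
      ≤ ‖(x - y) + h • S (x - y)‖ + ‖h • (r - S x)‖ := hsplit ▸ norm_add_le _ _
    _ ≤ (1 + h * C) * ‖x - y‖ + h * ‖r - S x‖ := by
      rw [norm_smul, Real.norm_of_nonneg hh]
      gcongr
      exact hstab _

end StepError

theorem stmt5_general (H : Type*) [NormedAddCommGroup H] [NormedSpace ℝ H]
    (S : H →L[ℝ] H) (h C₁ : ℝ) (hh : 0 < h) (hC₁ : 0 < C₁)
    (hstab : ∀ w : H, ‖w + h • S w‖ ≤ (1 + h * C₁) * ‖w‖)
    (u v r : ℕ → H) (h0 : u 0 = v 0)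
    (hu : ∀ k, u (k + 1) = u k + h • r k)
    (hv : ∀ k, v (k + 1) = v k + h • S (v k))
    (δ₁ : ℝ) (hproj : ∀ k, ‖r k - S (u k)‖ ≤ δ₁) :
    ∀ (k : ℕ) (w : ℕ → H),
      ‖u k - w k‖ ≤ ‖v k - w k‖ + (δ₁ / C₁) * (Real.exp (C₁ * h * k) - 1) := by
  intro k w
  have hstep : ∀ k, ‖u (k + 1) - v (k + 1)‖ ≤ (1 + h * C₁) * ‖u k - v k‖ + h * δ₁ := by
    intro k
    rw [hu, hv]
    exact (norm_perturbed_step_sub_step_le S hh.le hstab _ _ _).trans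
      (by gcongr; exact hproj k)
  have hδ₁ : 0 ≤ δ₁ := (norm_nonneg _).trans (hproj 0)
  have hdiff := le_div_mul_exp_sub_one_of_le_one_add_mul_add (e := fun k => ‖u k - v k‖)
    (mul_pos hh hC₁) (mul_nonneg hh.le hδ₁) (by simp [h0]) hstep k
  rw [mul_div_mul_left _ _ hh.ne', mul_comm h C₁] at hdiff
  calc ‖u k - w k‖ ≤ ‖u k - v k‖ + ‖v k - w k‖ := norm_sub_le_norm_sub_add_norm_sub _ _ _
    _ ≤ ‖v k - w k‖ + (δ₁ / C₁) * (Real.exp (C₁ * h * k) - 1) := by linarith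

/-- main error-estimation theorem. With the stability bound
`‖w + h•S w‖ ≤ (1 + h C₁) ‖w‖`, `u 0 = v 0`, `u (k+1) = u k + h • r k`,
`v (k+1) = v k + h • S (v k)` and projection errors `‖r k − S (u k)‖ ≤ δ₁`, one has,
for every `k` and every sequence `w`,
`‖u k − w k‖ ≤ ‖v k − w k‖ + (δ₁/C₁) (exp (C₁ h k) − 1)`. -/
theorem stmt5 (H : Type*) [NormedAddCommGroup H] [NormedSpace ℝ H]
    (S : H →L[ℝ] H) (h C₁ : ℝ) (hh : 0 < h) (hC₁ : 0 < C₁)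
    (hstab : ∀ w : H, ‖w + h • S w‖ ≤ (1 + h * C₁) * ‖w‖)
    (u v r : ℕ → H) (h0 : u 0 = v 0)
    (hu : ∀ k, u (k + 1) = u k + h • r k)
    (hv : ∀ k, v (k + 1) = v k + h • S (v k))
    (δ₁ : ℝ) (hδ₁ : 0 ≤ δ₁) (hproj : ∀ k, ‖r k - S (u k)‖ ≤ δ₁) :
    ∀ (k : ℕ) (w : ℕ → H),
      ‖u k - w k‖ ≤ ‖v k - w k‖ + (δ₁ / C₁) * (Real.exp (C₁ * h * k) - 1) :=
  stmt5_general H S h C₁ hh hC₁ hstab u v r h0 hu hv δ₁ hproj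
end
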